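/- For every integer t ≥ 1, the graph K̄_t △ K̄_t has a pivot-minor isomorphic to P_{2t}. -/

import Mathlib

open SimpleGraph

universe u v

/-! ### Basic graph operations: flips, local complementation, pivoting, pivot-minors -/

/-- Flip the adjacency of `G` exactly at the pairs of distinct vertices where the
(symmetrized) predicate `p` holds. -/
def sdFlip {V : Type u} (G : SimpleGraph V) (p : V → V → Prop) : SimpleGraph V where
  Adj x y := x ≠ y ∧ Xor' (G.Adj x y) (p x y ∨ p y x)
  symm := by
    constructor
    intro x y h
    refine ⟨h.1.symm, ?_⟩
    have h2 := h.2
    rwa [G.adj_comm x y, or_comm] at h2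
  loopless := by
    constructor
    intro x h
    exact h.1 rfl

/-- Local complementation `G * v`: complement the adjacency inside the neighborhood of `v`. -/
def localComp {V : Type u} (G : SimpleGraph V) (v : V) : SimpleGraph V :=
  sdFlip G (fun x y => G.Adj v x ∧ G.Adj v y)

/-- Pivoting an edge `uv`: `G ∧ uv = G * u * v * u`. -/
def pivot {V : Type u} (G : SimpleGraph V) (u v : V) : SimpleGraph V :=
  localComp (localComp (localComp G u) v) u

/-- Applying a sequence of pivots. -/
def pivotSeq {V : Type u} (G : SimpleGraph V) : List (V × V) → SimpleGraph V
  | [] => G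
  | e :: l => pivotSeq (pivot G e.1 e.2) l

/-- Each pivot in the sequence is performed on an edge of the current graph. -/
def ValidPivots {V : Type u} (G : SimpleGraph V) : List (V × V) → Prop
  | [] => True
  | e :: l => G.Adj e.1 e.2 ∧ ValidPivots (pivot G e.1 e.2) l

/-- `H` is a pivot-minor of `G`: `H` is isomorphic to a graph obtained from `G` by a sequence of
pivotings (on edges of the current graph) and vertex deletions. -/
def IsPivotMinorOf {W : Type v} {V : Type u} (H : SimpleGraph W) (G : SimpleGraph V) : Prop :=
  ∃ (l : List (V × V)) (S : Set V), ValidPivots G l ∧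
    Nonempty (H ≃g (pivotSeq G l).induce S)

/-! ### The half-graph join `G △ H` -/

/-- `G △ H`: the disjoint union of `G` and `H` together with the half graph joining them:
the `i`-th vertex of `G` is adjacent to the `j`-th vertex of `H` iff `i ≥ j`. -/
def halfJoin {n : ℕ} (G H : SimpleGraph (Fin n)) : SimpleGraph (Fin n ⊕ Fin n) where
  Adj x y :=
    match x, y with
    | Sum.inl i, Sum.inl i' => G.Adj i i'
    | Sum.inr j, Sum.inr j' => H.Adj j j'
    | Sum.inl i, Sum.inr j => j ≤ i
    | Sum.inr j, Sum.inl i => j ≤ i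
  symm := by
    constructor
    rintro (i | i) (j | j) h
    · exact G.adj_symm h
    · exact h
    · exact h
    · exact H.adj_symm h
  loopless := by
    constructor
    rintro (i | i) h
    · exact G.loopless.irrefl i h
    · exact H.loopless.irrefl i h

/-! ### Flips by a set, by a pair of sets, and by a collection of sets -/

/-- The `X`-flip of `G`: complement the adjacency inside `X`. (The `∅`-flip is `G` itself.) -/
def setFlip {V : Type u} (G : SimpleGraph V) (X : Set V) : SimpleGraph V :=
  sdFlip G (fun x y => x ∈ X ∧ y ∈ X)

/-- `G * (X, Y)`: complement the adjacency between `X` and `Y`. -/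
def pairFlip {V : Type u} (G : SimpleGraph V) (X Y : Set V) : SimpleGraph V :=
  sdFlip G (fun x y => x ∈ X ∧ y ∈ Y)

open Classical in
/-- The member of the collection `P` containing `v`, if any, and `{v}` otherwise. -/
noncomputable def blockOf {V : Type u} (P : Set (Set V)) (v : V) : Set V :=
  if h : ∃ X ∈ P, v ∈ X then h.choose else {v}

/-- A subset `F ⊆ P²` is symmetric if `(X,X') ∈ F` implies `(X',X) ∈ F`. -/
def SymmRelSet {α : Type u} (F : Set (α × α)) : Prop :=
  ∀ a b : α, (a, b) ∈ F → (b, a) ∈ F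

/-- The `(P,F)`-flip `H ⊕ (P,F)` of `H`: distinct vertices `u,v` are adjacent iff
`H.Adj u v` XOR `(P(u), P(v)) ∈ F`. -/
noncomputable def collFlip {V : Type u} (H : SimpleGraph V) (P : Set (Set V))
    (F : Set (Set V × Set V)) : SimpleGraph V :=
  sdFlip H (fun x y => (blockOf P x, blockOf P y) ∈ F)

/-- `P` is a collection of pairwise disjoint non-empty subsets. -/
def IsDisjNonemptyColl {V : Type u} (P : Set (Set V)) : Prop :=
  (∀ X ∈ P, X.Nonempty) ∧ P.PairwiseDisjoint id

/-- `Q` is a coarsening of `P`: a collection of disjoint non-empty sets,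
each a union of members of `P`. -/
def IsCoarsening {α : Type u} (Q P : Set (Set α)) : Prop :=
  IsDisjNonemptyColl Q ∧ ∀ X ∈ Q, ∃ C ⊆ P, X = ⋃₀ C

/-! ### The graph `mPₙ` and flipped `mPₙ`'s -/

/-- `mPₙ`: the disjoint union of `m` copies of the path `Pₙ`, with vertex set `[m] × [n]`. -/
def pathsGraph (m n : ℕ) : SimpleGraph (Fin m × Fin n) where
  Adj x y := x.1 = y.1 ∧ (pathGraph n).Adj x.2 y.2
  symm := by
    constructor
    rintro ⟨i, a⟩ ⟨j, b⟩ ⟨h1, h2⟩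
    exact ⟨h1.symm, (pathGraph n).adj_symm h2⟩
  loopless := by
    constructor
    rintro ⟨i, a⟩ ⟨_, h⟩
    exact (pathGraph n).loopless.irrefl a h

/-- The `j`-th column of `mPₙ`. -/
def column (m n : ℕ) (j : Fin n) : Set (Fin m × Fin n) := {p | p.2 = j}

/-- The column set of `mPₙ`. -/
def columnSet (m n : ℕ) : Set (Set (Fin m × Fin n)) := Set.range (column m n)

/-- A flipped `mPₙ`: a `P`-flip of `mPₙ` where `P` is a coarsening of the column set. -/
def IsFlippedPaths (m n : ℕ) (G : SimpleGraph (Fin m × Fin n)) : Prop :=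
  ∃ (P : Set (Set (Fin m × Fin n))) (F : Set (Set (Fin m × Fin n) × Set (Fin m × Fin n))),
    IsCoarsening P (columnSet m n) ∧ F ⊆ P ×ˢ P ∧ SymmRelSet F ∧
    G = collFlip (pathsGraph m n) P F

/-- A `k`-flipped `mPₙ`: a flipped `mPₙ` with `|P| ≤ k`. -/
def IsKFlippedPaths (k m n : ℕ) (G : SimpleGraph (Fin m × Fin n)) : Prop :=
  ∃ (P : Set (Set (Fin m × Fin n))) (F : Set (Set (Fin m × Fin n) × Set (Fin m × Fin n))),
    IsCoarsening P (columnSet m n) ∧ P.ncard ≤ k ∧ F ⊆ P ×ˢ P ∧ SymmRelSet F ∧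
    G = collFlip (pathsGraph m n) P F

/-! ### Cut-rank and rank-depth -/

open Classical in
/-- The cut-rank `ρ_G(S)`: the rank over GF(2) of the `S × (V ∖ S)` submatrix of the
adjacency matrix of `G`. -/
noncomputable def cutRank {V : Type u} [Fintype V] (G : SimpleGraph V) (S : Set V) : ℕ :=
  Matrix.rank (Matrix.of fun (i : S) (j : (Sᶜ : Set V)) =>
    if G.Adj (i : V) (j : V) then (1 : ZMod 2) else 0)

/-- The rank-depth of `G`: the least `k` such that `G` has a decomposition `(T, σ)` into a
tree `T` with the vertices of `G` identified with the leaves of `T` via `σ`, of width at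
most `k` and radius at most `k`.  The width condition is expressed as: for every non-leaf
node `v` of `T` and every set `S ⊆ V(G)` that is a union of parts of the partition of `V(G)`
induced by the components of `T - v`, we have `ρ_G(S) ≤ k`. -/
noncomputable def rankDepth {V : Type u} [Fintype V] (G : SimpleGraph V) : ℕ :=
  sInf {k : ℕ |
    ∃ (N : ℕ) (T : SimpleGraph (Fin N))
      (σ : V ≃ {x : Fin N // (T.neighborSet x).ncard ≤ 1}),
      T.IsTree ∧
      (∃ c : Fin N, ∀ x : Fin N, T.dist c x ≤ k) ∧
      (∀ x : Fin N, 1 < (T.neighborSet x).ncard →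
        ∀ S : Set V,
          (∀ a b : V, a ∈ S →
            (∃ w : T.Walk ((σ a : {x : Fin N // (T.neighborSet x).ncard ≤ 1}) : Fin N)
                ((σ b : {x : Fin N // (T.neighborSet x).ncard ≤ 1}) : Fin N),
              x ∉ w.support) → b ∈ S) →
          cutRank G S ≤ k)}

/-! ### Restrictions of collections, and the sets `C_F`, `L_F`, `R_F`, `D_F` -/

/-- The restriction `P|_{S}` of a collection of subsets of `V` to a subset `S`. -/
def restrictColl {V : Type u} (P : Set (Set V)) (S : Set V) : Set (Set S) :=
  {Y | ∃ X ∈ P, (Subtype.val ⁻¹' X : Set S).Nonempty ∧ Y = (Subtype.val ⁻¹' X : Set S)}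

/-- The restriction `F|_{S}` of a collection of pairs of subsets of `V` to a subset `S`. -/
def restrictF {V : Type u} (F : Set (Set V × Set V)) (S : Set V) : Set (Set S × Set S) :=
  {q | ∃ p ∈ F, (Subtype.val ⁻¹' p.1 : Set S).Nonempty ∧ (Subtype.val ⁻¹' p.2 : Set S).Nonempty ∧
      q = ((Subtype.val ⁻¹' p.1 : Set S), (Subtype.val ⁻¹' p.2 : Set S))}

/-- `C_F(X,X') = {Y ∈ P : (X,Y) ∈ F and (X',Y) ∈ F}`. -/
def CF {V : Type u} (P : Set (Set V)) (F : Set (Set V × Set V)) (X X' : Set V) : Set (Set V) :=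
  {Y ∈ P | (X, Y) ∈ F ∧ (X', Y) ∈ F}

/-- `L_F(X,X') = {Y ∈ P : (X,Y) ∈ F and (X',Y) ∉ F}`. -/
def LF {V : Type u} (P : Set (Set V)) (F : Set (Set V × Set V)) (X X' : Set V) : Set (Set V) :=
  {Y ∈ P | (X, Y) ∈ F ∧ (X', Y) ∉ F}

/-- `R_F(X,X') = {Y ∈ P : (X,Y) ∉ F and (X',Y) ∈ F}`. -/
def RF {V : Type u} (P : Set (Set V)) (F : Set (Set V × Set V)) (X X' : Set V) : Set (Set V) :=
  {Y ∈ P | (X, Y) ∉ F ∧ (X', Y) ∈ F}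

/-- `D_F(X,X') = (C×L) ∪ (C×R) ∪ (L×R) ∪ (L×C) ∪ (R×C) ∪ (R×L)`. -/
def DF {V : Type u} (P : Set (Set V)) (F : Set (Set V × Set V)) (X X' : Set V) :
    Set (Set V × Set V) :=
  (CF P F X X' ×ˢ LF P F X X') ∪ (CF P F X X' ×ˢ RF P F X X') ∪ (LF P F X X' ×ˢ RF P F X X') ∪
  (LF P F X X' ×ˢ CF P F X X') ∪ (RF P F X X' ×ˢ CF P F X X') ∪ (RF P F X X' ×ˢ LF P F X X')

/-- The set of `t` consecutive vertices of the path `P_s` starting at position `i` (0-indexed). -/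
def consec (s i t : ℕ) : Set (Fin s) := {x | i ≤ (x : ℕ) ∧ (x : ℕ) < i + t}

/-- An `(s,t)`-path: a graph isomorphic to the `X`-flip of `P_s` for a set `X` of `t`
consecutive vertices of `P_s`. -/
def IsSTPath (s t : ℕ) {W : Type v} (G : SimpleGraph W) : Prop :=
  ∃ i : ℕ, i + t ≤ s ∧ Nonempty (G ≃g setFlip (pathGraph s) (consec s i t))

/-!
Label the vertices of `K̄_t △ K̄_t` as `aᵢ = inl i` and `bⱼ = inr j`, so that `aᵢbⱼ` is an edge
iff `j ≤ i`: over GF(2) the biadjacency matrix is the lower unitriangular all-ones matrix `L`.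
Pivoting on the matching edges `a₀b₀, a₁b₁, …, a_{t-1}b_{t-1}` in turn exchanges the two sides of
the bipartition, replacing `L` by `L⁻¹`, which is bidiagonal; the result is the path
`b₀ a₀ b₁ a₁ ⋯ b_{t-1} a_{t-1}`, so no vertex has to be deleted.
-/

section Pivot

variable {V : Type u} {G : SimpleGraph V} {u v x y : V}

theorem localComp_adj :
    (localComp G v).Adj x y ↔ x ≠ y ∧ Xor (G.Adj x y) (G.Adj v x ∧ G.Adj v y) := by
  simp only [localComp, sdFlip, Xor', and_comm (a := G.Adj v y), or_self]

theorem pivot_adj_of_ne (huv : G.Adj u v) (hxu : x ≠ u) (hxv : x ≠ v) (hyu : y ≠ u)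
    (hyv : y ≠ v) :
    (pivot G u v).Adj x y ↔ Xor (G.Adj x y)
      ((G.Adj u x ∨ G.Adj v x) ∧ (G.Adj u y ∨ G.Adj v y) ∧
        ¬((G.Adj u x ↔ G.Adj u y) ∧ (G.Adj v x ↔ G.Adj v y))) := by
  simp only [pivot, localComp_adj, G.adj_comm v u, ne_eq, huv, huv.ne.symm, hxu.symm, hxv.symm,
    hyu.symm, hyv.symm, not_false_eq_true, true_and]
  by_cases hxy : x = y
  · subst hxy
    simp
  simp only [hxy, not_false_eq_true, true_and]
  by_cases h1 : G.Adj u x <;> by_cases h2 : G.Adj u y <;> by_cases h3 : G.Adj v x <;>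
    by_cases h4 : G.Adj v y <;> simp [h1, h2, h3, h4, xor_def]

theorem pivot_adj_left (huv : G.Adj u v) (hyu : y ≠ u) (hyv : y ≠ v) :
    (pivot G u v).Adj u y ↔ G.Adj v y := by
  by_cases h1 : G.Adj u y <;> by_cases h2 : G.Adj v y <;>
    simp [pivot, localComp_adj, G.adj_comm v u, huv, huv.ne.symm, hyu.symm, hyv.symm, h1, h2,
      xor_def]

theorem pivot_adj_right (huv : G.Adj u v) (hyu : y ≠ u) (hyv : y ≠ v) :
    (pivot G u v).Adj v y ↔ G.Adj u y := by
  by_cases h1 : G.Adj u y <;> by_cases h2 : G.Adj v y <;>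
    simp [pivot, localComp_adj, G.adj_comm v u, huv, huv.ne, huv.ne.symm, hyu.symm, hyv.symm,
      h1, h2, xor_def]

theorem pivot_adj_self (huv : G.Adj u v) : (pivot G u v).Adj u v := by
  simp [pivot, localComp_adj, G.adj_comm v u, huv, huv.ne, huv.ne.symm, xor_def]

/-- Pivoting on `uv` swaps `u` and `v`, and complements the adjacency between vertices lying in
two different classes among `N(u) ∩ N(v)`, `N(u) \ N(v)` and `N(v) \ N(u)`. -/
theorem pivot_adj [DecidableEq V] (huv : G.Adj u v) :
    (pivot G u v).Adj x y ↔ x ≠ y ∧ Xor (G.Adj (Equiv.swap u v x) (Equiv.swap u v y))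
      (x ≠ u ∧ x ≠ v ∧ y ≠ u ∧ y ≠ v ∧ (G.Adj u x ∨ G.Adj v x) ∧ (G.Adj u y ∨ G.Adj v y) ∧
        ¬((G.Adj u x ↔ G.Adj u y) ∧ (G.Adj v x ↔ G.Adj v y))) := by
  have hne := huv.ne
  by_cases hxy : x = y
  · subst hxy
    simp
  by_cases hxu : x = u <;> by_cases hxv : x = v <;> by_cases hyu : y = u <;> by_cases hyv : y = v <;>
    simp_all [Equiv.swap_apply_of_ne_of_ne, pivot_adj_of_ne, pivot_adj_left, pivot_adj_right,
      pivot_adj_self, SimpleGraph.adj_comm, xor_def]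

theorem pivotSeq_ofFn {n : ℕ} (G : ℕ → SimpleGraph V) (a b : Fin n → V)
    (hadj : ∀ i : Fin n, (G i).Adj (a i) (b i))
    (hpivot : ∀ i : Fin n, pivot (G i) (a i) (b i) = G (i + 1)) :
    ValidPivots (G 0) (List.ofFn fun i => (a i, b i)) ∧
      pivotSeq (G 0) (List.ofFn fun i => (a i, b i)) = G n := by
  induction n generalizing G with
  | zero => exact ⟨trivial, rfl⟩
  | succ n ih =>
    have hpivot0 : pivot (G 0) (a 0) (b 0) = G 1 := hpivot 0
    obtain ⟨hvalid, hseq⟩ := ih (fun k => G (k + 1)) (fun i => a i.succ) (fun i => b i.succ)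
      (fun i => hadj i.succ) (fun i => hpivot i.succ)
    rw [List.ofFn_succ]
    exact ⟨⟨hadj 0, hpivot0 ▸ hvalid⟩, (congrArg (pivotSeq · _) hpivot0).trans hseq⟩

end Pivot

open Sum

/-- The graph obtained from `K̄_t △ K̄_t` by pivoting on `inl j, inr j` for `j = 0, …, k - 1`:
the path `b₀ a₀ ⋯ b_{k-1} a_{k-1}`, the half graph on the `aᵢ, bⱼ` with `i, j ≥ k`, and the edges
from `a_{k-1}` to all `aᵢ` with `i ≥ k`. -/
def pivotedHalfGraph (t k : ℕ) : SimpleGraph (Fin t ⊕ Fin t) := fromRel fun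
  | inl i, inr j => k ≤ (j : ℕ) ∧ (j : ℕ) ≤ i ∨ (j : ℕ) < k ∧ ((j : ℕ) = i ∨ (j : ℕ) = i + 1)
  | inl i, inl i' => (i : ℕ) + 1 = k ∧ k ≤ (i' : ℕ)
  | _, _ => False

section PivotedHalfGraph

variable {t k : ℕ} {i j : Fin t}

@[simp] theorem pivotedHalfGraph_adj_inl_inr :
    (pivotedHalfGraph t k).Adj (inl i) (inr j) ↔
      k ≤ (j : ℕ) ∧ (j : ℕ) ≤ i ∨ (j : ℕ) < k ∧ ((j : ℕ) = i ∨ (j : ℕ) = i + 1) := by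
  simp [pivotedHalfGraph]

@[simp] theorem pivotedHalfGraph_adj_inr_inl :
    (pivotedHalfGraph t k).Adj (inr j) (inl i) ↔
      k ≤ (j : ℕ) ∧ (j : ℕ) ≤ i ∨ (j : ℕ) < k ∧ ((j : ℕ) = i ∨ (j : ℕ) = i + 1) := by
  simp [pivotedHalfGraph]

@[simp] theorem pivotedHalfGraph_adj_inl_inl :
    (pivotedHalfGraph t k).Adj (inl i) (inl j) ↔
      i ≠ j ∧ ((i : ℕ) + 1 = k ∧ k ≤ (j : ℕ) ∨ (j : ℕ) + 1 = k ∧ k ≤ (i : ℕ)) := by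
  simp [pivotedHalfGraph]

@[simp] theorem pivotedHalfGraph_adj_inr_inr : ¬(pivotedHalfGraph t k).Adj (inr i) (inr j) := by
  simp [pivotedHalfGraph]

theorem halfJoin_bot_eq_pivotedHalfGraph_zero :
    halfJoin (⊥ : SimpleGraph (Fin t)) ⊥ = pivotedHalfGraph t 0 := by
  ext (i | i) (j | j)
  · simp [halfJoin]
  · simp only [halfJoin, pivotedHalfGraph_adj_inl_inr, Fin.le_def]
    omega
  · simp only [halfJoin, pivotedHalfGraph_adj_inr_inl, Fin.le_def]
    omega
  · simp [halfJoin]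

theorem pivotedHalfGraph_adj_diag (i : Fin t) : (pivotedHalfGraph t i).Adj (inl i) (inr i) := by
  simp

theorem pivot_pivotedHalfGraph (i : Fin t) :
    pivot (pivotedHalfGraph t i) (inl i) (inr i) = pivotedHalfGraph t (i + 1) := by
  ext x y
  rw [pivot_adj (pivotedHalfGraph_adj_diag i)]
  rcases x with x | x <;> rcases y with y | y <;>
    simp only [Equiv.swap_apply_def, inl.injEq, inr.injEq, reduceCtorEq] <;>
    split_ifs <;> subst_vars <;>
    simp only [pivotedHalfGraph_adj_inl_inr, pivotedHalfGraph_adj_inr_inl,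
      pivotedHalfGraph_adj_inl_inl, pivotedHalfGraph_adj_inr_inr, ne_eq, inl.injEq, inr.injEq,
      reduceCtorEq, Fin.ext_iff, xor_def] at * <;>
    grind

def finSumFinInterleave (t : ℕ) : Fin t ⊕ Fin t ≃ Fin (2 * t) where
  toFun
    | inl i => ⟨2 * i + 1, by omega⟩
    | inr j => ⟨2 * j, by omega⟩
  invFun n := if n.val % 2 = 0 then inr ⟨n / 2, by omega⟩ else inl ⟨n / 2, by omega⟩
  left_inv := by
    rintro (i | i) <;> simp [Fin.ext_iff]
    omega
  right_inv n := by
    by_cases h : n.val % 2 = 0 <;> simp [h, Fin.ext_iff] <;> omega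

def pivotedHalfGraphIsoPathGraph (t : ℕ) : pivotedHalfGraph t t ≃g pathGraph (2 * t) where
  toEquiv := finSumFinInterleave t
  map_rel_iff' := by
    rintro (i | i) (j | j) <;> simp [finSumFinInterleave, pathGraph_adj] <;> omega

end PivotedHalfGraph

theorem stmt5_general (t : ℕ) :
    IsPivotMinorOf (pathGraph (2 * t))
      (halfJoin (⊥ : SimpleGraph (Fin t)) (⊥ : SimpleGraph (Fin t))) := by
  obtain ⟨hvalid, hseq⟩ := pivotSeq_ofFn (pivotedHalfGraph t) inl inr pivotedHalfGraph_adj_diag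
    pivot_pivotedHalfGraph
  rw [← halfJoin_bot_eq_pivotedHalfGraph_zero] at hvalid hseq
  refine ⟨_, Set.univ, hvalid, ⟨?_⟩⟩
  rw [hseq]
  exact (pivotedHalfGraphIsoPathGraph t).symm.trans (induceUnivIso _).symm

theorem stmt5 (t : ℕ) (ht : 1 ≤ t) :
    IsPivotMinorOf (pathGraph (2 * t))
      (halfJoin (⊥ : SimpleGraph (Fin t)) (⊥ : SimpleGraph (Fin t))) :=
  stmt5_general t
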